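/- Let P_K be an orthogonal projection and P_{Ω⊥} an orthogonal projection with ‖P_K P_{Ω⊥} P_K‖ ≤ c < 1, and let P_Ω = I - P_{Ω⊥}. Then for any X, ‖P_Ω P_K P_{Ω⊥}(X)‖_F² ≥ (1-c)·‖P_K P_{Ω⊥}(X)‖_F². -/
import Mathlib


open scoped BigOperators RealInnerProductSpace

/-- on the Hilbert space of m×k real matrices with the Frobenius
inner product, if P_K and P_{Ω⊥} are orthogonal projections with
‖P_K P_{Ω⊥} P_K‖ ≤ c < 1, then for any X,
‖P_Ω P_K P_{Ω⊥}(X)‖_F² ≥ (1-c)·‖P_K P_{Ω⊥}(X)‖_F², where P_Ω = I - P_{Ω⊥}. -/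
theorem proj_lower_bound (m k : ℕ) (c : ℝ) (hc : c < 1)
    (PK POc : EuclideanSpace ℝ (Fin m × Fin k) →L[ℝ] EuclideanSpace ℝ (Fin m × Fin k))
    (hPKidem : ∀ x, PK (PK x) = PK x)
    (hPKsym : ∀ x y, ⟪PK x, y⟫ = ⟪x, PK y⟫)
    (hPOcidem : ∀ x, POc (POc x) = POc x)
    (hPOcsym : ∀ x y, ⟪POc x, y⟫ = ⟪x, POc y⟫)
    (hnorm : ‖PK ∘L POc ∘L PK‖ ≤ c) :
    ∀ X, (1 - c) * ‖PK (POc X)‖ ^ 2 ≤ ‖PK (POc X) - POc (PK (POc X))‖ ^ 2 := by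
  intro X
  set Y := PK (POc X) with hY
  have hPKY : PK Y = Y := hPKidem (POc X)
  -- ⟪Y, POc Y⟫ = ⟪POc Y, POc Y⟫
  have h1 : ⟪Y, POc Y⟫ = ‖POc Y‖ ^ 2 := by
    rw [← real_inner_self_eq_norm_sq]
    conv_rhs => rw [hPOcsym, hPOcidem]
  -- ⟪Y, POc Y⟫ = ⟪Y, (PK ∘L POc ∘L PK) Y⟫
  have h2 : ⟪Y, POc Y⟫ = ⟪Y, (PK ∘L POc ∘L PK) Y⟫ := by
    simp only [ContinuousLinearMap.comp_apply, hPKY]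
    rw [← hPKsym, hPKY]
  have h3 : ⟪Y, POc Y⟫ ≤ c * ‖Y‖ ^ 2 := by
    calc ⟪Y, POc Y⟫ = ⟪Y, (PK ∘L POc ∘L PK) Y⟫ := h2
      _ ≤ ‖Y‖ * ‖(PK ∘L POc ∘L PK) Y‖ := real_inner_le_norm _ _
      _ ≤ ‖Y‖ * (c * ‖Y‖) := by
          have := (PK ∘L POc ∘L PK).le_opNorm Y
          have h0 : ‖Y‖ ≥ 0 := norm_nonneg _
          nlinarith [hnorm, mul_le_mul_of_nonneg_left hnorm (mul_nonneg h0 h0)]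
      _ = c * ‖Y‖ ^ 2 := by ring
  have hexp : ‖Y - POc Y‖ ^ 2 = ‖Y‖ ^ 2 - ⟪Y, POc Y⟫ := by
    rw [norm_sub_sq_real, h1]; ring
  rw [hexp]
  nlinarith [h3]
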